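/- arXiv:1705.09681 — 4 statements merged into one kernel-verified Lean document; each statement's English description precedes it below -/
import Mathlib

section
/- Let p be a monic nonconstant polynomial with integer coefficients. If p has a complex root α with 0 < |α| < 1, then p also has a complex root β with |β| > 1. -/
/-! Were every root in the closed unit disc, the monic polynomial would have Mahler measure 1,
so by Kronecker's theorem every nonzero root would be a root of unity, of absolute value 1. -/

open Polynomial

theorem Polynomial.mahlerMeasure_eq_one_of_monic_of_forall_norm_root_le_one {p : ℂ[X]}
    (hp : p.Monic) (hroots : ∀ z ∈ p.roots, ‖z‖ ≤ 1) : p.mahlerMeasure = 1 := by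
  rw [mahlerMeasure_eq_leadingCoeff_mul_prod_roots, hp.leadingCoeff, norm_one, one_mul]
  refine Multiset.prod_eq_one fun x hx ↦ ?_
  obtain ⟨z, hz, rfl⟩ := Multiset.mem_map.mp hx
  exact max_eq_left (hroots z hz)

theorem stmt_0_general (p : Polynomial ℤ) (hmonic : p.Monic)
    (α : ℂ) (hα : α ∈ (p.map (Int.castRingHom ℂ)).roots)
    (h0 : 0 < ‖α‖) (h1 : ‖α‖ < 1) :
    ∃ β ∈ (p.map (Int.castRingHom ℂ)).roots, 1 < ‖β‖ := by
  by_contra! hroots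
  have hM : (p.map (Int.castRingHom ℂ)).mahlerMeasure = 1 :=
    mahlerMeasure_eq_one_of_monic_of_forall_norm_root_le_one (hmonic.map _) hroots
  obtain ⟨n, hn, hαn⟩ := pow_eq_one_of_mahlerMeasure_eq_one hM (norm_pos_iff.mp h0) hα
  exact h1.ne (Complex.norm_eq_one_of_pow_eq_one hαn hn.ne')

/-- If a monic nonconstant integer polynomial has a complex root `α` with
`0 < |α| < 1`, then it also has a complex root `β` with `|β| > 1`. -/
theorem stmt_0 (p : Polynomial ℤ) (hmonic : p.Monic) (hdeg : 1 ≤ p.natDegree)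
    (α : ℂ) (hα : α ∈ (p.map (Int.castRingHom ℂ)).roots)
    (h0 : 0 < ‖α‖) (h1 : ‖α‖ < 1) :
    ∃ β ∈ (p.map (Int.castRingHom ℂ)).roots, 1 < ‖β‖ :=
  stmt_0_general p hmonic α hα h0 h1
end

section
/- The polynomial X^6 + 4X^5 + 4X^4 + 4X^2 + 4X + 1 with integer coefficients is irreducible over ℚ and has a complex root α with |α| = 1 such that α^n ≠ 1 for every integer n ≥ 1. -/
/-!
Every complex root of `f = X^6 + 4X^5 + 4X^4 + 4X^2 + 4X + 1` has modulus below its Cauchy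
bound `5`, so a monic factor `g` of positive degree satisfies `|g(8)| = ∏ |8 - z| > 1`; since
`f(8) = 409889` is prime, `f` is irreducible.

`f` is palindromic: `f(X) = X^3 q(X + X⁻¹)` with `q(y) = y^3 + 4y^2 + y - 8`, and `q` has a root
`y ∈ [1, 2]`. The solutions of `α + α⁻¹ = y` are `e^{±iθ}` with `2 cos θ = y`, hence unimodular.
If such an `α` were a root of unity, the irreducible `f` would be its cyclotomic polynomial `Φₙ`;
but `Φₙ(1)` is `0`, `1` or a prime, while `f(1) = 18`.
-/

noncomputable def examplePoly : Polynomial ℤ :=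
  Polynomial.X ^ 6 + 4 * Polynomial.X ^ 5 + 4 * Polynomial.X ^ 4 +
    4 * Polynomial.X ^ 2 + 4 * Polynomial.X + 1

open Polynomial

namespace Polynomial

theorem one_lt_nnnorm_eval_of_roots {K : Type*} [NormedField K] [IsAlgClosed K] {g : K[X]}
    (hg : g.Monic) (hdeg : 0 < g.natDegree) {x : K} (hroots : ∀ z ∈ g.roots, 1 < ‖x - z‖₊) :
    1 < ‖g.eval x‖₊ := by
  have hsplit := IsAlgClosed.splits g
  obtain ⟨z, hz⟩ : ∃ z, z ∈ g.roots := by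
    rwa [← Multiset.card_pos_iff_exists_mem, splits_iff_card_roots.mp hsplit]
  obtain ⟨t, ht⟩ := Multiset.exists_cons_of_mem hz
  rw [hsplit.eval_eq_prod_roots_of_monic hg, ht, Multiset.map_cons, Multiset.prod_cons, nnnorm_mul]
  have htail : ‖(t.map (x - ·)).prod‖₊ = (t.map fun w => ‖x - w‖₊).prod := by
    simpa [Multiset.map_map] using map_multiset_prod (nnnormHom : K →*₀ NNReal) (t.map (x - ·))
  rw [htail]
  refine one_lt_mul_of_lt_of_le (hroots z hz) (Multiset.one_le_prod_of_one_le fun y hy => ?_)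
  obtain ⟨w, hw, rfl⟩ := Multiset.mem_map.mp hy
  exact (hroots w (ht ▸ Multiset.mem_cons_of_mem hw)).le

theorem not_isUnit_eval_of_dvd_of_norm_roots_lt {f g : ℤ[X]} (hf : f.Monic) (hdvd : g ∣ f)
    (hg : g.Monic) (hdeg : 0 < g.natDegree) {m : ℤ}
    (hroots : ∀ z ∈ (f.map (Int.castRingHom ℂ)).roots, ‖z‖ < m - 1) : ¬IsUnit (g.eval m) := by
  have hsub : (g.map (Int.castRingHom ℂ)).roots ≤ (f.map (Int.castRingHom ℂ)).roots :=
    roots.le_of_dvd (hf.map _).ne_zero (Polynomial.map_dvd _ hdvd)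
  have hlt : 1 < ‖(g.map (Int.castRingHom ℂ)).eval (m : ℂ)‖₊ := by
    refine one_lt_nnnorm_eval_of_roots (hg.map _) (by rwa [hg.natDegree_map]) fun z hz => ?_
    have hz_lt := hroots z (Multiset.subset_of_le hsub hz)
    have htriangle := norm_sub_norm_le (m : ℂ) z
    rw [Complex.norm_intCast] at htriangle
    rw [← NNReal.coe_lt_coe, coe_nnnorm, NNReal.coe_one]
    linarith [le_abs_self (m : ℝ)]
  rw [eval_intCast_map] at hlt
  intro hu
  rcases Int.isUnit_iff.mp hu with h | h <;> simp [h] at hlt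

theorem irreducible_of_prime_eval_of_norm_roots_lt {f : ℤ[X]} (hf : f.Monic) {m : ℤ}
    (hprime : Prime (f.eval m))
    (hroots : ∀ z ∈ (f.map (Int.castRingHom ℂ)).roots, ‖z‖ < m - 1) : Irreducible f := by
  refine hf.irreducible_iff_natDegree.mpr ⟨?_, fun g h hg hh hgh => ?_⟩
  · rintro rfl
    exact hprime.not_isUnit (by simp)
  · by_contra! hdeg
    obtain hunit | hunit := hprime.irreducible.isUnit_or_isUnit (by rw [← hgh, eval_mul])
    · exact not_isUnit_eval_of_dvd_of_norm_roots_lt hf (Dvd.intro _ hgh) hg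
        (Nat.pos_of_ne_zero hdeg.1) hroots hunit
    · exact not_isUnit_eval_of_dvd_of_norm_roots_lt hf (Dvd.intro_left _ hgh) hh
        (Nat.pos_of_ne_zero hdeg.2) hroots hunit

theorem eval_one_cyclotomic_eq_zero_or_one_or_prime (R : Type*) [CommRing R] (n : ℕ) :
    eval 1 (cyclotomic n R) = 0 ∨ eval 1 (cyclotomic n R) = 1 ∨
      ∃ p : ℕ, p.Prime ∧ eval 1 (cyclotomic n R) = p := by
  by_cases h : ∃ p k : ℕ, p.Prime ∧ p ^ k = n
  · obtain ⟨p, k, hp, rfl⟩ := h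
    cases k with
    | zero => simp
    | succ k =>
      have := Fact.mk hp
      exact Or.inr (Or.inr ⟨p, hp, eval_one_cyclotomic_prime_pow k⟩)
  · push Not at h
    exact Or.inr (Or.inl (eval_one_cyclotomic_not_prime_pow fun hp k => h _ k hp))

theorem eq_cyclotomic_of_aeval_eq_zero {f : ℚ[X]} (hirr : Irreducible f) (hmon : f.Monic)
    {α : ℂ} (hα : aeval α f = 0) (hfin : IsOfFinOrder α) : f = cyclotomic (orderOf α) ℚ := by
  rw [cyclotomic_eq_minpoly_rat (IsPrimitiveRoot.orderOf α) hfin.orderOf_pos]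
  exact minpoly.eq_of_irreducible_of_monic hirr hα hmon

theorem not_isOfFinOrder_of_aeval_eq_zero {f : ℚ[X]} (hirr : Irreducible f) (hmon : f.Monic)
    {k : ℕ} (hk : f.eval 1 = k) (hk0 : k ≠ 0) (hk1 : k ≠ 1) (hkp : ¬k.Prime)
    {α : ℂ} (hα : aeval α f = 0) : ¬IsOfFinOrder α := fun hfin => by
  rw [eq_cyclotomic_of_aeval_eq_zero hirr hmon hα hfin] at hk
  obtain h | h | ⟨p, hp, h⟩ := eval_one_cyclotomic_eq_zero_or_one_or_prime ℚ (orderOf α)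
  · exact hk0 (by exact_mod_cast hk.symm.trans h)
  · exact hk1 (by exact_mod_cast hk.symm.trans h)
  · exact hkp ((Nat.cast_injective (R := ℚ) (h.symm.trans hk)) ▸ hp)

end Polynomial

theorem Complex.exists_norm_eq_one_sq_add_one_eq_mul {y : ℝ} (hy : |y| ≤ 2) :
    ∃ α : ℂ, ‖α‖ = 1 ∧ α ^ 2 + 1 = y * α := by
  set θ := Real.arccos (y / 2)
  have hcos : Complex.cos θ = y / 2 := by
    exact_mod_cast Real.cos_arccos (by linarith [neg_abs_le y]) (by linarith [le_abs_self y])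
  refine ⟨Complex.exp (θ * Complex.I), Complex.norm_exp_ofReal_mul_I θ, ?_⟩
  rw [Complex.exp_mul_I]
  linear_combination -Complex.sin_sq_add_cos_sq (θ : ℂ) +
    2 * (Complex.cos θ + Complex.sin θ * Complex.I) * hcos + Complex.sin θ ^ 2 * Complex.I_sq

theorem examplePoly_monic : examplePoly.Monic := by
  unfold examplePoly; monicity!

theorem examplePoly_natDegree : examplePoly.natDegree = 6 := by
  unfold examplePoly; compute_degree!

theorem cauchyBound_examplePoly : cauchyBound (examplePoly.map (Int.castRingHom ℂ)) ≤ 5 := by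
  rw [cauchyBound, (examplePoly_monic.map _).leadingCoeff, examplePoly_monic.natDegree_map,
    examplePoly_natDegree, nnnorm_one, div_one]
  have hcoeff : (Finset.range 6).sup (‖(examplePoly.map (Int.castRingHom ℂ)).coeff ·‖₊) ≤ 4 := by
    refine Finset.sup_le fun i hi => ?_
    simp only [Finset.mem_range] at hi
    interval_cases i <;> simp [examplePoly, coeff_X, coeff_one, coeff_X_pow]
  calc _ ≤ (4 : NNReal) + 1 := by gcongr
    _ = 5 := by norm_num

theorem norm_lt_five_of_mem_roots_examplePoly {z : ℂ}
    (hz : z ∈ (examplePoly.map (Int.castRingHom ℂ)).roots) : ‖z‖ < 5 := by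
  have hbound := (isRoot_of_mem_roots hz).norm_lt_cauchyBound (examplePoly_monic.map _).ne_zero
  rw [← NNReal.coe_lt_coe, coe_nnnorm] at hbound
  have h5 : (cauchyBound (examplePoly.map (Int.castRingHom ℂ)) : ℝ) ≤ 5 := by
    exact_mod_cast cauchyBound_examplePoly
  linarith

theorem examplePoly_irreducible : Irreducible examplePoly := by
  refine irreducible_of_prime_eval_of_norm_roots_lt examplePoly_monic (m := 8) ?_ fun z hz => ?_
  · rw [show examplePoly.eval 8 = 409889 by simp [examplePoly], Int.prime_iff_natAbs_prime]
    norm_num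
  · have := norm_lt_five_of_mem_roots_examplePoly hz
    push_cast
    linarith

theorem eval_map_examplePoly_of_sq_add_one_eq_mul {α y : ℂ} (h : α ^ 2 + 1 = y * α) :
    (examplePoly.map (Int.castRingHom ℂ)).eval α = α ^ 3 * (y ^ 3 + 4 * y ^ 2 + y - 8) := by
  simp only [examplePoly, Polynomial.map_add, Polynomial.map_mul, Polynomial.map_pow, map_X,
    Polynomial.map_ofNat, Polynomial.map_one, eval_add, eval_mul, eval_pow, eval_X, eval_ofNat,
    eval_one]
  linear_combination
    (α ^ 4 + (4 + y) * α ^ 3 + (3 + 4 * y + y ^ 2) * α ^ 2 + (4 + y) * α + 1) * h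

theorem exists_mem_roots_examplePoly_norm_eq_one :
    ∃ α ∈ (examplePoly.map (Int.castRingHom ℂ)).roots, ‖α‖ = 1 := by
  obtain ⟨y, ⟨hy1, hy2⟩, hy⟩ : ∃ y ∈ Set.Icc (1 : ℝ) 2, y ^ 3 + 4 * y ^ 2 + y - 8 = 0 :=
    intermediate_value_Icc (by norm_num) (by fun_prop) (by norm_num)
  obtain ⟨α, hnorm, hα⟩ :=
    Complex.exists_norm_eq_one_sq_add_one_eq_mul (abs_le.mpr ⟨by linarith, hy2⟩)
  refine ⟨α, (mem_roots (examplePoly_monic.map _).ne_zero).mpr ?_, hnorm⟩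
  have hy' : (y : ℂ) ^ 3 + 4 * (y : ℂ) ^ 2 + y - 8 = 0 := by exact_mod_cast hy
  rw [IsRoot, eval_map_examplePoly_of_sq_add_one_eq_mul hα, hy', mul_zero]

/-- The polynomial `X^6 + 4X^5 + 4X^4 + 4X^2 + 4X + 1` is irreducible over `ℚ`
and has a complex root `α` with `|α| = 1` which is not a root of unity. -/
theorem stmt_2 :
    Irreducible (examplePoly.map (Int.castRingHom ℚ)) ∧
    ∃ α ∈ (examplePoly.map (Int.castRingHom ℂ)).roots,
      ‖α‖ = 1 ∧ ∀ n : ℕ, 1 ≤ n → α ^ n ≠ 1 := by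
  have hirr : Irreducible (examplePoly.map (Int.castRingHom ℚ)) :=
    (IsPrimitive.Int.irreducible_iff_irreducible_map_cast examplePoly_monic.isPrimitive).mp
      examplePoly_irreducible
  obtain ⟨α, hroot, hnorm⟩ := exists_mem_roots_examplePoly_norm_eq_one
  have haeval : aeval α (examplePoly.map (Int.castRingHom ℚ)) = 0 := by
    rw [aeval_def, eval₂_map, RingHom.ext_int ((algebraMap ℚ ℂ).comp _) (Int.castRingHom ℂ),
      ← eval_map]
    exact isRoot_of_mem_roots hroot
  have hfin : ¬IsOfFinOrder α :=
    not_isOfFinOrder_of_aeval_eq_zero hirr (examplePoly_monic.map _) (k := 18)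
      (by norm_num [examplePoly]) (by norm_num) (by norm_num) (by norm_num) haeval
  exact ⟨hirr, α, hroot, hnorm, fun n hn hpow => hfin (isOfFinOrder_iff_pow_eq_one.mpr ⟨n, hn, hpow⟩)⟩
end

section
/- Let α ∈ ℂ with |α| ≠ 1. Then the sequence (1/n)·log|1 − α^n| converges to log(max(1, |α|)) as n → ∞. -/
open Filter Topology

/-! For `‖α‖ < 1` the factor `1 - αⁿ` tends to `1`, so its logarithm is bounded and dies
after division by `n`. For `‖α‖ > 1` write `1 - αⁿ = -αⁿ (1 - α⁻ⁿ)`: the first factor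
contributes exactly `n log ‖α‖`, the second falls under the previous case. -/

section NormedDivisionRing

variable {𝕜 : Type*} [NormedDivisionRing 𝕜]

theorem tendsto_log_norm_one_sub_pow_of_norm_lt_one {β : 𝕜} (hβ : ‖β‖ < 1) :
    Tendsto (fun n : ℕ => Real.log ‖1 - β ^ n‖) atTop (𝓝 0) := by
  have hpow : Tendsto (fun n : ℕ => ‖1 - β ^ n‖) atTop (𝓝 1) := by
    simpa using ((tendsto_pow_atTop_nhds_zero_of_norm_lt_one hβ).const_sub 1).norm
  simpa using hpow.log one_ne_zero

theorem norm_one_sub_pow_eq_mul {α : 𝕜} (hα : α ≠ 0) (n : ℕ) :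
    ‖1 - α ^ n‖ = ‖α‖ ^ n * ‖1 - α⁻¹ ^ n‖ := by
  rw [← norm_pow, ← norm_mul, mul_sub, mul_one, inv_pow,
    mul_inv_cancel₀ (pow_ne_zero n hα), ← norm_neg, neg_sub]

theorem log_norm_one_sub_pow_of_one_lt_norm {α : 𝕜} (hα : 1 < ‖α‖) {n : ℕ} (hn : n ≠ 0) :
    Real.log ‖1 - α ^ n‖ = n * Real.log ‖α‖ + Real.log ‖1 - α⁻¹ ^ n‖ := by
  have hα0 : α ≠ 0 := norm_pos_iff.mp (one_pos.trans hα)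
  have hinv : ‖α⁻¹ ^ n‖ < 1 := by
    rw [norm_pow, norm_inv]
    exact pow_lt_one₀ (by positivity) (inv_lt_one_of_one_lt₀ hα) hn
  have hne : ‖1 - α⁻¹ ^ n‖ ≠ 0 := by
    rw [norm_ne_zero_iff, sub_ne_zero]
    rintro heq
    simp [← heq] at hinv
  rw [norm_one_sub_pow_eq_mul hα0, Real.log_mul (by positivity) hne, Real.log_pow]

end NormedDivisionRing

/-- For `α ∈ ℂ` with `|α| ≠ 1`, the sequence `(1/n)·log|1 - α^n|` converges to
`log (max 1 |α|)`. -/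
theorem stmt_4 (α : ℂ) (h : ‖α‖ ≠ 1) :
    Filter.Tendsto (fun n : ℕ => (1 / n : ℝ) * Real.log ‖1 - α ^ n‖)
      Filter.atTop (nhds (Real.log (max 1 ‖α‖))) := by
  have hdiv : Tendsto (fun n : ℕ => (1 / n : ℝ)) atTop (𝓝 0) :=
    tendsto_one_div_atTop_nhds_zero_nat
  rcases h.lt_or_gt with hlt | hgt
  · rw [max_eq_left hlt.le, Real.log_one]
    simpa using hdiv.mul (tendsto_log_norm_one_sub_pow_of_norm_lt_one hlt)
  · have hinv : ‖α⁻¹‖ < 1 := by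
      rw [norm_inv]
      exact inv_lt_one_of_one_lt₀ hgt
    have hlim := (tendsto_const_nhds (x := Real.log ‖α‖)).add
      (hdiv.mul (tendsto_log_norm_one_sub_pow_of_norm_lt_one hinv))
    rw [mul_zero, add_zero] at hlim
    rw [max_eq_right hgt.le]
    refine hlim.congr' ?_
    filter_upwards [eventually_ne_atTop 0] with n hn
    rw [log_norm_one_sub_pow_of_one_lt_norm hgt hn]
    field_simp
end

section
/- Let Q be a monic polynomial with integer coefficients that has at least one nonzero complex root and no complex root that is a root of unity. Then Q has a complex root β with |β| > 1. -/
/-- A complex number is a root of unity if some positive power of it equals `1`. -/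
def IsRootOfUnity (ζ : ℂ) : Prop := ∃ m : ℕ, 1 ≤ m ∧ ζ ^ m = 1

open Polynomial IntermediateField NumberField

/-- The conjugates of `α` over `ℚ` are again roots of `Q`, so Kronecker's theorem applies to `α` in
the number field `ℚ⟮α⟯`. -/
theorem Polynomial.Monic.exists_pow_eq_one_of_forall_norm_aroots_le_one {Q : ℤ[X]} (hQ : Q.Monic)
    {α : ℂ} (hα : α ∈ Q.aroots ℂ) (hα0 : α ≠ 0) (hle : ∀ β ∈ Q.aroots ℂ, ‖β‖ ≤ 1) :
    ∃ n, 0 < n ∧ α ^ n = 1 := by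
  obtain ⟨hQ0, hQα⟩ := mem_aroots.1 hα
  have : FiniteDimensional ℚ ℚ⟮α⟯ := adjoin.finiteDimensional (IsIntegral.tower_top ⟨Q, hQ, hQα⟩)
  have : NumberField ℚ⟮α⟯ := ⟨⟩
  set x := AdjoinSimple.gen ℚ α
  have hx : algebraMap ℚ⟮α⟯ ℂ x = α := AdjoinSimple.algebraMap_gen ℚ α
  have hQx : aeval x Q = 0 :=
    (algebraMap ℚ⟮α⟯ ℂ).injective (by rw [← aeval_algebraMap_apply, hx, hQα, map_zero])
  have hx0 : x ≠ 0 := by rintro h; rw [h, map_zero] at hx; exact hα0 hx.symm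
  have hconj (φ : ℚ⟮α⟯ →+* ℂ) : φ x ∈ Q.aroots ℂ :=
    mem_aroots.2 ⟨hQ0, (aeval_algHom_apply φ.toIntAlgHom x Q).trans (by rw [hQx, map_zero])⟩
  obtain ⟨n, hn, hxn⟩ :=
    Embeddings.pow_eq_one_of_norm_le_one ℚ⟮α⟯ ℂ hx0 ⟨Q, hQ, hQx⟩ fun φ ↦ hle _ (hconj φ)
  exact ⟨n, hn, by rw [← hx, ← map_pow, hxn, map_one]⟩

/-- A monic integer polynomial with at least one nonzero complex root and
no complex root that is a root of unity has a complex root `β` with `|β| > 1`. -/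
theorem stmt_7 (Q : Polynomial ℤ) (hmonic : Q.Monic)
    (hnonzero : ∃ β ∈ (Q.map (Int.castRingHom ℂ)).roots, β ≠ 0)
    (hru : ∀ β ∈ (Q.map (Int.castRingHom ℂ)).roots, ¬IsRootOfUnity β) :
    ∃ β ∈ (Q.map (Int.castRingHom ℂ)).roots, 1 < ‖β‖ := by
  by_contra! hsmall
  obtain ⟨α, hα, hα0⟩ := hnonzero
  exact hru α hα (hmonic.exists_pow_eq_one_of_forall_norm_aroots_le_one hα hα0 hsmall)
end
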